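/- Let H be a finite abelian group with elements h_0 = 0, h_1, ..., h_{t−1}, and fix a type λ = (λ_0,...,λ_{t−1}). Suppose that for infinitely many primes p, every non-zero-sum subset of (ℤ_p × H) \ {0} of type λ is sequenceable. Then every non-zero-sum subset of (ℤ × H) \ {0} of type λ is sequenceable. -/

import Mathlib

/-- An ordering (list) is a *linear sequencing* if its partial sums
`y_0 = 0, y_1, ..., y_k` are pairwise distinct. -/
def IsLinSeq {G : Type*} [AddCommGroup G] (l : List G) : Prop :=
  Function.Injective (fun i : Fin (l.length + 1) => (l.take i.val).sum)

/-- An ordering (list) is a *rotational sequencing* if its partial sums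
`y_0 = 0, y_1, ..., y_k` are pairwise distinct except for `y_k = y_0 = 0`. -/
def IsRotSeq {G : Type*} [AddCommGroup G] (l : List G) : Prop :=
  l ≠ [] ∧ l.sum = 0 ∧
    Function.Injective (fun i : Fin l.length => (l.take i.val).sum)

/-- A finite subset is *sequenceable* if some ordering of its elements is a
linear or a rotational sequencing. -/
def Sequenceable {G : Type*} [AddCommGroup G] (S : Finset G) : Prop :=
  ∃ l : List G, l.Nodup ∧ (∀ x, x ∈ l ↔ x ∈ S) ∧ (IsLinSeq l ∨ IsRotSeq l)

/-- A finite subset `S ⊆ G × H` has *type* `lam` if for each `h : H` exactly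
`lam h` elements of `S` have second coordinate `h`. -/
def HasType {G H : Type*} (S : Finset (G × H)) (lam : H → ℕ) : Prop :=
  ∀ h : H, ({x ∈ (S : Set (G × H)) | x.2 = h}).ncard = lam h

/-! Let `B = ∑ x ∈ S, |x.1|`, which bounds the first coordinate of every element of `S`, of `0`
and of `∑ S`. For a prime `p > 2B` from the hypothesis, reduction `π = π_p × id` is injective on
elements with first coordinate of absolute value at most `B`. Hence `π(S)` avoids `0`, has the
same type and the non-zero sum `π(∑ S)`, so it is sequenceable. That sequencing cannot be
rotational, since its sum is not zero; pulling a linear sequencing of `π(S)` back along `π`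
gives one of `S`, because equal partial sums upstairs would give equal partial sums downstairs. -/

open Finset

theorem ZMod.intCast_injOn_abs_le {n : ℕ} {B : ℤ} (hB : 2 * B < n) :
    Set.InjOn (Int.cast : ℤ → ZMod n) {a | |a| ≤ B} := by
  intro a ha b hb hab
  have hdvd : (n : ℤ) ∣ b - a := (ZMod.intCast_eq_intCast_iff_dvd_sub a b n).mp hab
  have hlt : |b - a| < n := by
    have := abs_sub b a
    simp only [Set.mem_ofPred_eq] at ha hb
    linarith
  linarith [Int.eq_zero_of_abs_lt_dvd hdvd hlt]

theorem List.exists_map_eq_of_forall_mem_image {α β : Type*} {f : α → β} {s : Set α} :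
    ∀ {l' : List β}, (∀ y ∈ l', y ∈ f '' s) → ∃ l : List α, l.map f = l' ∧ ∀ x ∈ l, x ∈ s
  | [], _ => ⟨[], rfl, by simp⟩
  | y :: l', h => by
    obtain ⟨x, hx, rfl⟩ := h y List.mem_cons_self
    obtain ⟨l, rfl, hl⟩ :=
      exists_map_eq_of_forall_mem_image fun z hz => h z (List.mem_cons_of_mem _ hz)
    exact ⟨x :: l, rfl, by simpa [hx] using hl⟩

theorem IsLinSeq.of_map {G G' : Type*} [AddCommGroup G] [AddCommGroup G'] (f : G →+ G')
    {l : List G} (h : IsLinSeq (l.map f)) : IsLinSeq l := by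
  intro i j hij
  have hlen : (l.map f).length + 1 = l.length + 1 := by rw [List.length_map]
  have hsums := @h (Fin.cast hlen.symm i) (Fin.cast hlen.symm j)
    (by simp only [Fin.val_cast, ← List.map_take, ← map_list_sum, hij])
  exact Fin.ext (by simpa using congrArg Fin.val hsums)

theorem List.sum_eq_finset_sum_of_nodup {G : Type*} [AddCommMonoid G] [DecidableEq G]
    {l : List G} {S : Finset G} (hnd : l.Nodup) (hmem : ∀ x, x ∈ l ↔ x ∈ S) :
    l.sum = ∑ x ∈ S, x := by
  have hS : S = l.toFinset := by
    ext x
    rw [List.mem_toFinset, hmem]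
  rw [hS, List.sum_toFinset (fun x => x) hnd, List.map_id']

theorem Sequenceable.of_image {G G' : Type*} [AddCommGroup G] [AddCommGroup G'] [DecidableEq G']
    (f : G →+ G') {S : Finset G} (hf : Set.InjOn f S) (hsum : ∑ y ∈ S.image f, y ≠ 0)
    (hseq : Sequenceable (S.image f)) : Sequenceable S := by
  obtain ⟨l', hnd', hmem', hlin | hrot⟩ := hseq
  · obtain ⟨l, rfl, hlS⟩ := List.exists_map_eq_of_forall_mem_image (f := f) (s := S)
      fun y hy => by simpa using (hmem' y).mp hy
    refine ⟨l, hnd'.of_map f, fun x => ⟨hlS x, fun hx => ?_⟩, Or.inl (hlin.of_map f)⟩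
    obtain ⟨z, hz, hzx⟩ := List.mem_map.mp ((hmem' (f x)).mpr (mem_image_of_mem f hx))
    rwa [← hf (hlS z hz) hx hzx]
  · exact absurd (List.sum_eq_finset_sum_of_nodup hnd' hmem' ▸ hrot.2.1) hsum

theorem HasType.image {G G' H : Type*} [DecidableEq (G' × H)] {S : Finset (G × H)} {lam : H → ℕ}
    (f : G × H → G' × H) (hf2 : ∀ x, (f x).2 = x.2) (hf : Set.InjOn f S) (hS : HasType S lam) :
    HasType (S.image f) lam := by
  intro h
  have hfiber : {y ∈ ((S.image f : Finset (G' × H)) : Set (G' × H)) | y.2 = h}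
      = f '' {x ∈ (S : Set (G × H)) | x.2 = h} := by
    ext y
    simp only [coe_image, Set.mem_ofPred_eq, Set.mem_image, Finset.mem_coe]
    constructor
    · rintro ⟨⟨x, hx, rfl⟩, rfl⟩
      exact ⟨x, ⟨hx, (hf2 x).symm⟩, rfl⟩
    · rintro ⟨x, ⟨hx, rfl⟩, rfl⟩
      exact ⟨⟨x, hx, rfl⟩, hf2 x⟩
  rw [hfiber, (hf.mono fun x hx => hx.1).ncard_image]
  exact hS h

theorem stmt_9_general (H : Type*) [AddCommGroup H] (lam : H → ℕ)
    (hyp : {p : ℕ | p.Prime ∧ ∀ S : Finset (ZMod p × H),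
      (0 : ZMod p × H) ∉ S → HasType S lam → (∑ x ∈ S, x) ≠ 0 →
      Sequenceable S}.Infinite) :
    ∀ S : Finset (ℤ × H), (0 : ℤ × H) ∉ S → HasType S lam →
      (∑ x ∈ S, x) ≠ 0 → Sequenceable S := by
  intro S hS0 hStype hSsum
  classical
  set B : ℤ := ∑ x ∈ S, |x.1|
  obtain ⟨p, ⟨-, hseq⟩, hp⟩ := hyp.exists_gt (2 * B).toNat
  have hpB : 2 * B < p := by omega
  let π := (Int.castAddHom (ZMod p)).prodMap (AddMonoidHom.id H)
  have hπ : Set.InjOn π {x | |x.1| ≤ B} :=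
    ((ZMod.intCast_injOn_abs_le hpB).prodMap (Set.injOn_univ.mpr Function.injective_id)).mono
      fun x hx => Set.mk_mem_prod hx (Set.mem_univ x.2)
  have hS : ↑S ⊆ {x : ℤ × H | |x.1| ≤ B} := fun x hx =>
    single_le_sum (f := fun y : ℤ × H => |y.1|) (fun y _ => abs_nonneg _) hx
  have hsumB : |(∑ x ∈ S, x).1| ≤ B := by
    rw [Prod.fst_sum]
    exact abs_sum_le_sum_abs _ _
  have h0B : |(0 : ℤ × H).1| ≤ B := by simpa using sum_nonneg fun x _ => abs_nonneg x.1
  have hπsum : ∑ y ∈ S.image π, y ≠ 0 := by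
    rw [sum_image (hπ.mono hS), ← map_sum, ← map_zero π]
    exact fun h => hSsum (hπ hsumB h0B h)
  have hπ0 : (0 : ZMod p × H) ∉ S.image π := by
    rw [← map_zero π, mem_image]
    rintro ⟨x, hx, hx0⟩
    exact hS0 (hπ (hS hx) h0B hx0 ▸ hx)
  exact Sequenceable.of_image π (hπ.mono hS) hπsum
    (hseq _ hπ0 (hStype.image π (fun _ => rfl) (hπ.mono hS)) hπsum)

/-- If for infinitely many primes p every non-zero-sum subset of
(ℤ_p × H) minus {0} of type lam is sequenceable, then so is every
non-zero-sum subset of (ℤ × H) minus {0} of type lam. -/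
theorem stmt_9 (H : Type*) [AddCommGroup H] [Fintype H] (lam : H → ℕ)
    (hyp : {p : ℕ | p.Prime ∧ ∀ S : Finset (ZMod p × H),
      (0 : ZMod p × H) ∉ S → HasType S lam → (∑ x ∈ S, x) ≠ 0 →
      Sequenceable S}.Infinite) :
    ∀ S : Finset (ℤ × H), (0 : ℤ × H) ∉ S → HasType S lam →
      (∑ x ∈ S, x) ≠ 0 → Sequenceable S :=
  stmt_9_general H lam hyp
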